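/- Let K be a finite index subgroup of Mod_R^* and f : K → Mod_R^* an injective homomorphism such that for every isotopy class α there exist nonzero integers N, M with f(t_α^N) = t_{f_*(α)}^M for a well-defined map f_* on isotopy classes of essential simple closed curves. Then for any two isotopy classes α, β: i(α, β) = 0 if and only if i(f_*(α), f_*(β)) = 0; in particular f_* is a superinjective simplicial map of the curve complex C(R). -/
import Mathlib


/-- Let `K` be a finite index subgroup of `Mod_R^*` and
`f : K → Mod_R^*` an injective homomorphism such that for every isotopy class
`α` there exist nonzero integers `N, M` with `f (t_α^N) = t_{f_*(α)}^M` for a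
well-defined map `f_*` on isotopy classes.  Then for any two isotopy classes
`α, β`: `i(α, β) = 0` iff `i(f_*(α), f_*(β)) = 0`; in particular `f_*` is a
superinjective simplicial map of the curve complex `C(R)`.

The hypotheses `htw` and `hcomm` record the standing facts about Dehn twists
used in the proof: twist powers are equal iff the classes and exponents agree,
and twist powers about distinct classes commute iff the classes are disjoint. -/
theorem induced_map_preserves_disjointness
    (V : Type*)                                   -- isotopy classes of curves
    (geomInt : V → V → ℕ)                         -- geometric intersection number
    (hsymm : ∀ a b, geomInt a b = geomInt b a)
    (hself : ∀ a, geomInt a a = 0)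
    (G : Type*) [Group G]                         -- extended mapping class group Mod_R^*
    (t : V → G)                                   -- Dehn twists
    (htw : ∀ (a b : V) (i j : ℤ), i ≠ 0 → j ≠ 0 →
      ((t a) ^ i = (t b) ^ j ↔ a = b ∧ i = j))
    (hcomm : ∀ (a b : V), a ≠ b → ∀ (i j : ℤ), i ≠ 0 → j ≠ 0 →
      (Commute ((t a) ^ i) ((t b) ^ j) ↔ geomInt a b = 0))
    (K : Subgroup G) (hK : K.FiniteIndex)
    (f : K →* G) (hf : Function.Injective f)
    (fstar : V → V)                               -- the induced map f_*
    (hcorr : ∀ α : V, ∃ (N M : ℤ) (hmem : (t α) ^ N ∈ K),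
      N ≠ 0 ∧ M ≠ 0 ∧ f ⟨(t α) ^ N, hmem⟩ = (t (fstar α)) ^ M) :
    ∀ α β : V, geomInt α β = 0 ↔ geomInt (fstar α) (fstar β) = 0 := by
  intro α β
  obtain ⟨N, M, hmemα, hN, hM, hfα⟩ := hcorr α
  obtain ⟨N', M', hmemβ, hN', hM', hfβ⟩ := hcorr β
  -- Commuting in K transfers along the injective f
  have key : Commute ((t α) ^ N) ((t β) ^ N') ↔
      Commute ((t (fstar α)) ^ M) ((t (fstar β)) ^ M') := by
    have h1 : Commute ((t α) ^ N) ((t β) ^ N') ↔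
        Commute (⟨(t α) ^ N, hmemα⟩ : K) ⟨(t β) ^ N', hmemβ⟩ := by
      simp [Commute, SemiconjBy, Subtype.ext_iff]
    have h2 : Commute (⟨(t α) ^ N, hmemα⟩ : K) ⟨(t β) ^ N', hmemβ⟩ ↔
        Commute (f ⟨(t α) ^ N, hmemα⟩) (f ⟨(t β) ^ N', hmemβ⟩) := by
      simp only [Commute, SemiconjBy, ← map_mul]
      exact ⟨fun h => congrArg f h, fun h => hf h⟩
    rw [h1, h2, hfα, hfβ]
  constructor
  · intro h
    by_cases hab : fstar α = fstar β
    · rw [hab]; exact hself _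
    by_cases hab' : α = β
    · exact absurd (congrArg fstar hab') hab
    have hc : Commute ((t α) ^ N) ((t β) ^ N') :=
      (hcomm α β hab' N N' hN hN').mpr h
    exact (hcomm _ _ hab M M' hM hM').mp (key.mp hc)
  · intro h
    by_cases hab' : α = β
    · rw [hab']; exact hself _
    by_cases hab : fstar α = fstar β
    · have hc : Commute ((t (fstar α)) ^ M) ((t (fstar β)) ^ M') := by
        rw [hab]; exact (Commute.refl _).zpow_zpow M M'
      exact (hcomm α β hab' N N' hN hN').mp (key.mpr hc)
    · have hc := (hcomm _ _ hab M M' hM hM').mpr h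
      exact (hcomm α β hab' N N' hN hN').mp (key.mpr hc)
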